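/- arXiv:2012.12190 — 7 statements merged into one kernel-verified Lean document; each statement's English description precedes it below -/
import Mathlib

section
/- Let G be a finite connected simple graph with two distinguished vertices m1 ≠ m2 (the monitors). Let e = {r,s} ∈ E(G) be a bridge of G (i.e., G − e is disconnected) with {r,s} ≠ {m1,m2}, such that m1 and m2 lie in different connected components of G − e. Then e is unidentifiable, and moreover every edge of G that shares an endpoint with e is unidentifiable. -/
open SimpleGraph

/-- The total weight of a walk: the sum of the weights of its edges. -/
def walkWeight {V : Type*} (G : SimpleGraph V) {u v : V} (w : Sym2 V → ℝ) (p : G.Walk u v) : ℝ :=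
  (p.edges.map w).sum

/-- An edge is identifiable if any two weight functions agreeing on the total weight of
every simple path between the monitors m1 and m2 agree on that edge. -/
def Identifiable {V : Type*} (G : SimpleGraph V) (m1 m2 : V) (e : Sym2 V) : Prop :=
  ∀ w w' : Sym2 V → ℝ,
    (∀ p : G.Walk m1 m2, p.IsPath → walkWeight G w p = walkWeight G w' p) →
    w e = w' e

/-- k-vertex-connectivity: more than k vertices, and still connected after deleting
any set of fewer than k vertices. -/
def KVertexConnected {V : Type*} [Fintype V] [DecidableEq V] (G : SimpleGraph V) (k : ℕ) : Prop :=
  k < Fintype.card V ∧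
  ∀ S : Finset V, S.card < k → (G.induce (↑(Sᶜ) : Set V)).Connected

/-- k-edge-connectivity: at least two vertices, and still connected after deleting
any set of fewer than k edges. -/
def KEdgeConnected {V : Type*} [Fintype V] (G : SimpleGraph V) (k : ℕ) : Prop :=
  2 ≤ Fintype.card V ∧
  ∀ F : Finset (Sym2 V), F.card < k → (G.deleteEdges ↑F).Connected

/-- The extended graph: add two virtual monitors (`Sum.inr false` and `Sum.inr true`),
each adjacent to every monitor in M, with no edge joining the two virtual monitors. -/
def extendedGraph {V : Type*} (G : SimpleGraph V) (M : Set V) : SimpleGraph (V ⊕ Bool) :=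
  SimpleGraph.fromRel (fun a b =>
    match a, b with
    | Sum.inl u, Sum.inl v => G.Adj u v
    | Sum.inl u, Sum.inr _ => u ∈ M
    | Sum.inr _, Sum.inl v => v ∈ M
    | Sum.inr _, Sum.inr _ => False)

/-!
Every `m1`–`m2` path crosses the separating bridge `e₀ = s(r, s)` exactly once and hence
visits each endpoint `v` of `e₀` exactly once. Putting weight `1` on every edge at `v` gives
every such path the weight `2 - [v = m1] - [v = m2]`, which is also what that number placed on
`e₀` alone gives. The two weight functions agree on all paths but differ on every edge at `v`
other than `e₀`, and also on `e₀` when `v` is not a monitor; since `s(r, s) ≠ s(m1, m2)`,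
some endpoint of the bridge is not a monitor.
-/

theorem List.sum_map_single {α M : Type*} [DecidableEq α] [AddCommMonoid M]
    (l : List α) (a : α) (c : M) : (l.map (Pi.single a c)).sum = l.count a • c := by
  induction l with
  | nil => simp
  | cons x l ih => by_cases h : x = a <;> simp [h, ih, add_smul, add_comm]

theorem Sym2.exists_mem_notMem_of_ne {α : Type*} {z z' : Sym2 α} (hz : ¬ z.IsDiag)
    (h : z ≠ z') : ∃ v ∈ z, v ∉ z' := by
  induction z with | h a b => ?_
  induction z' with | h c d => ?_
  by_contra! hsub
  simp only [Sym2.mem_iff, forall_eq_or_imp, forall_eq, Sym2.mk_isDiag_iff] at hsub hz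
  grind [Sym2.eq_swap]

namespace SimpleGraph

variable {V : Type*} {G : SimpleGraph V}

def potentialWeight (φ : V → ℝ) : Sym2 V → ℝ :=
  Sym2.lift ⟨fun x y => φ x + φ y, fun _ _ => add_comm _ _⟩

theorem walkWeight_potentialWeight (φ : V → ℝ) {u v : V} (p : G.Walk u v) :
    walkWeight G (potentialWeight φ) p = 2 * (p.support.map φ).sum - φ u - φ v := by
  induction p with
  | nil => simp [walkWeight]; ring
  | cons _ q ih =>
    simp only [walkWeight, potentialWeight, Walk.edges_cons, Walk.support_cons, List.map_cons,
      List.sum_cons, Sym2.lift_mk] at ih ⊢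
    rw [ih]
    ring

theorem not_identifiable_of_forall_isPath_mem_edges {m1 m2 v : V} {e₀ e : Sym2 V}
    (hpath : ∀ p : G.Walk m1 m2, p.IsPath → e₀ ∈ p.edges) (hv₀ : v ∈ e₀)
    (he : e ∈ G.edgeSet) (hv : v ∈ e) (h : e ≠ e₀ ∨ v ∉ s(m1, m2)) :
    ¬ Identifiable G m1 m2 e := by
  classical
  intro hid
  let φ : V → ℝ := Pi.single v 1
  have hagree := hid (potentialWeight φ) (Pi.single e₀ (2 - φ m1 - φ m2)) fun p hp => by
    have hv_once : p.support.count v = 1 :=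
      List.count_eq_one_of_mem hp.support_nodup (Walk.mem_support_of_mem_edges (hpath p hp) hv₀)
    have he₀_once : p.edges.count e₀ = 1 := hp.isTrail.count_edges_eq_one (hpath p hp)
    rw [walkWeight_potentialWeight, walkWeight, List.sum_map_single, List.sum_map_single,
      hv_once, he₀_once]
    simp
  obtain ⟨y, rfl⟩ := Sym2.mem_iff_exists.mp hv
  have hyv : y ≠ v := (G.ne_of_adj he).symm
  have hstar : potentialWeight φ s(v, y) = 1 := by simp [potentialWeight, φ, hyv]
  rw [hstar] at hagree
  rcases h with hne | hmon
  · simp [hne] at hagree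
  · obtain rfl : s(v, y) = e₀ := by
      by_contra hne
      simp [hne] at hagree
    simp only [Sym2.mem_iff, not_or] at hmon
    simp [φ, Ne.symm hmon.1, Ne.symm hmon.2] at hagree

end SimpleGraph

theorem bridge_and_adjacent_unidentifiable_general {V : Type*}
    (G : SimpleGraph V) (m1 m2 : V)
    (r s : V) (he : G.Adj r s)
    (hne : s(r, s) ≠ s(m1, m2))
    (hsep : ¬ (G.deleteEdges {s(r, s)}).Reachable m1 m2) :
    ¬ Identifiable G m1 m2 s(r, s) ∧
    ∀ e ∈ G.edgeSet, (∃ x, x ∈ e ∧ (x = r ∨ x = s)) → ¬ Identifiable G m1 m2 e := by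
  have hpath : ∀ p : G.Walk m1 m2, p.IsPath → s(r, s) ∈ p.edges :=
    fun p _ => p.mem_edges_of_not_reachable_deleteEdges hsep
  have hbridge : ¬ Identifiable G m1 m2 s(r, s) := by
    obtain ⟨v, hv, hvm⟩ := Sym2.exists_mem_notMem_of_ne (G.not_isDiag_of_mem_edgeSet he) hne
    exact not_identifiable_of_forall_isPath_mem_edges hpath hv he hv (Or.inr hvm)
  refine ⟨hbridge, fun e he' ⟨x, hx, hxrs⟩ => ?_⟩
  by_cases heq : e = s(r, s)
  · exact heq ▸ hbridge
  · have hx₀ : x ∈ s(r, s) := by rcases hxrs with rfl | rfl <;> simp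
    exact not_identifiable_of_forall_isPath_mem_edges hpath hx₀ he' hx (Or.inl heq)

/-- If e = {r,s} is a bridge of a finite connected graph G, with
{r,s} ≠ {m1,m2} and with the monitors m1, m2 in different connected components of
G − e, then e and every edge sharing an endpoint with e are unidentifiable. -/
theorem bridge_and_adjacent_unidentifiable {V : Type*} [Fintype V] [DecidableEq V]
    (G : SimpleGraph V) (hG : G.Connected) (m1 m2 : V) (hm : m1 ≠ m2)
    (r s : V) (he : G.Adj r s)
    (hbridge : ¬ (G.deleteEdges {s(r, s)}).Connected)
    (hne : s(r, s) ≠ s(m1, m2))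
    (hsep : ¬ (G.deleteEdges {s(r, s)}).Reachable m1 m2) :
    ¬ Identifiable G m1 m2 s(r, s) ∧
    ∀ e ∈ G.edgeSet, (∃ x, x ∈ e ∧ (x = r ∨ x = s)) → ¬ Identifiable G m1 m2 e :=
  bridge_and_adjacent_unidentifiable_general G m1 m2 r s he hne hsep
end

section
/- Let G be a finite connected simple graph with at least 4 vertices and two distinguished vertices m1 ≠ m2 (the monitors) with m1m2 ∉ E(G), and suppose the interior graph H = G − m1 − m2 is nonempty and connected. If every interior link of G (every edge with neither endpoint a monitor) is identifiable, then the graph G + m1m2 obtained by adding the edge m1m2 is 3-vertex-connected. -/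
open SimpleGraph

/-!
If `G + m1m2 - S` is disconnected for some `S` with `|S| ≤ 2` and `S ≠ {m1, m2}`, one of its
components `A` avoids both monitors, and every edge of `G` leaving `A` ends in `S`.
If an interior vertex `x ∈ S` is adjacent to `A`, let `y ∉ A` be the other vertex of `S` (or any
other vertex outside `A`). The weight that is `+1` on edges between `x` and `A` and `-1` on edges
between `y` and `A` vanishes on every `m1`–`m2` path, since such a path enters `A` through one of
`x`, `y` and leaves it through the other; so the interior link from `x` into `A` is unidentifiable.
Otherwise `A` only touches monitors, so `A` is the whole interior (`H` is connected), and both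
monitors, each having an interior neighbour, lie in `S`.
-/

namespace SimpleGraph

variable {V : Type*} {G G' : SimpleGraph V}

def outerBoundary (G : SimpleGraph V) (A : Set V) : Set V :=
  {b | b ∉ A ∧ ∃ a ∈ A, G.Adj a b}

lemma outerBoundary_mono (h : G ≤ G') (A : Set V) : G.outerBoundary A ⊆ G'.outerBoundary A :=
  fun _ ⟨hb, a, ha, hab⟩ => ⟨hb, a, ha, h hab⟩

lemma subset_of_induce_preconnected {I A : Set V} (hI : (G.induce I).Preconnected)
    (hA : (A ∩ I).Nonempty) (hdisj : Disjoint (G.outerBoundary A) I) : I ⊆ A := by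
  obtain ⟨a, haA, haI⟩ := hA
  intro v hvI
  by_contra hvA
  obtain ⟨p⟩ := hI ⟨a, haI⟩ ⟨v, hvI⟩
  obtain ⟨d, -, hfst, hsnd⟩ := p.exists_boundary_dart (Subtype.val ⁻¹' A) haA hvA
  exact hdisj.notMem_of_mem_left ⟨hsnd, _, hfst, d.adj⟩ d.snd.2

lemma exists_outerBoundary_subset_compl_of_not_connected {K : Set V} {b : V} (hb : b ∈ K)
    (h : ¬(G.induce K).Connected) :
    ∃ A : Set V, A.Nonempty ∧ b ∉ A ∧ G.outerBoundary A ⊆ Kᶜ := by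
  set R := (G.induce K).Reachable ⟨b, hb⟩
  refine ⟨{v | ∃ hv : v ∈ K, ¬R ⟨v, hv⟩}, ?_, fun ⟨_, hnr⟩ => hnr .rfl, ?_⟩
  · have : Nonempty K := ⟨⟨b, hb⟩⟩
    obtain ⟨u, v, huv⟩ : ∃ u v, ¬(G.induce K).Reachable u v := by
      by_contra! hc
      exact h ⟨hc⟩
    by_cases hu : R u
    · exact ⟨v, v.2, fun hv => huv (hu.symm.trans hv)⟩
    · exact ⟨u, u.2, hu⟩
  · rintro c ⟨hcA, a, ⟨haK, hna⟩, hac⟩ hcK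
    exact hcA ⟨hcK, fun hc => hna (hc.trans (Adj.reachable (G := G.induce K) hac.symm))⟩

lemma induce_sup_fromEdgeSet_of_notMem {s : Set V} {u v : V} (hu : u ∉ s) :
    (G ⊔ fromEdgeSet {s(u, v)}).induce s = G.induce s := by
  ext ⟨a, ha⟩ ⟨b, hb⟩
  simp only [comap_adj, Function.Embedding.coe_subtype, sup_adj, fromEdgeSet_adj,
    Set.mem_singleton_iff, Sym2.eq_iff, or_iff_left_iff_imp]
  rintro ⟨⟨rfl, rfl⟩ | ⟨rfl, rfl⟩, -⟩ <;> contradiction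

end SimpleGraph

section CrossingWeight

variable {V : Type*} {G : SimpleGraph V}

lemma walkWeight_cons (w : Sym2 V → ℝ) {u v x : V} (h : G.Adj u v) (p : G.Walk v x) :
    walkWeight G w (.cons h p) = w s(u, v) + walkWeight G w p := by
  simp [walkWeight]

lemma walkWeight_neg (w : Sym2 V → ℝ) {u v : V} (p : G.Walk u v) :
    walkWeight G (-w) p = -walkWeight G w p := by
  rw [walkWeight, walkWeight, List.sum_neg, List.map_map]
  rfl

open Classical in
noncomputable def crossingWeight (A : Set V) (x y : V) (e : Sym2 V) : ℝ :=
  (if x ∈ e ∧ ∃ a ∈ A, a ∈ e then 1 else 0) -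
    (if y ∈ e ∧ ∃ a ∈ A, a ∈ e then 1 else 0)

lemma crossingWeight_swap (A : Set V) (x y : V) :
    crossingWeight A y x = -crossingWeight A x y := by
  ext e; simp [crossingWeight]

variable {A : Set V}

lemma crossingWeight_of_notMem_of_notMem {u v : V} (hu : u ∉ A) (hv : v ∉ A) (x y : V) :
    crossingWeight A x y s(u, v) = 0 := by
  have : ¬∃ a ∈ A, a ∈ s(u, v) := by
    simp only [Sym2.mem_iff]; rintro ⟨a, ha, rfl | rfl⟩ <;> contradiction
  rw [crossingWeight, if_neg (fun h => this h.2), if_neg (fun h => this h.2), sub_zero]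

lemma crossingWeight_of_mem_of_mem {u v x y : V} (hu : u ∈ A) (hv : v ∈ A) (hx : x ∉ A)
    (hy : y ∉ A) : crossingWeight A x y s(u, v) = 0 := by
  have hx' : x ∉ s(u, v) := by rw [Sym2.mem_iff]; rintro (rfl | rfl) <;> contradiction
  have hy' : y ∉ s(u, v) := by rw [Sym2.mem_iff]; rintro (rfl | rfl) <;> contradiction
  rw [crossingWeight, if_neg (fun h => hx' h.1), if_neg (fun h => hy' h.1), sub_zero]

lemma crossingWeight_eq_one {a x y : V} (ha : a ∈ A) (hxy : x ≠ y) (hy : y ∉ A) :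
    crossingWeight A x y s(x, a) = 1 := by
  have hy' : y ∉ s(x, a) := by rw [Sym2.mem_iff]; rintro (rfl | rfl) <;> contradiction
  rw [crossingWeight, if_pos ⟨Sym2.mem_mk_left x a, a, ha, Sym2.mem_mk_right x a⟩,
    if_neg (fun h => hy' h.1), sub_zero]

lemma crossingWeight_eq_neg_one {a x y : V} (ha : a ∈ A) (hxy : x ≠ y) (hx : x ∉ A) :
    crossingWeight A x y s(y, a) = -1 := by
  rw [← neg_neg (crossingWeight A x y), ← crossingWeight_swap, Pi.neg_apply,
    crossingWeight_eq_one ha hxy.symm hx]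

/-- A path from outside `A` crosses into `A` through one of `x`, `y` and back out through the other;
a path that starts in `A` and avoids `y` leaves `A` through `x`. -/
lemma walkWeight_crossingWeight {u v : V} (p : G.Walk u v) (hp : p.IsPath) (hv : v ∉ A)
    {x y : V} (hxy : x ≠ y) (hx : x ∉ A) (hy : y ∉ A) (hA : G.outerBoundary A ⊆ {x, y}) :
    (u ∉ A → walkWeight G (crossingWeight A x y) p = 0) ∧
      (u ∈ A → y ∉ p.support → walkWeight G (crossingWeight A x y) p = 1) := by
  induction p generalizing x y with
  | nil => exact ⟨fun _ => rfl, fun hu => absurd hu hv⟩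
  | @cons u u' v h q ih =>
    replace ih := @ih hp.of_cons hv
    have hu : u ∉ q.support := ((Walk.cons_isPath_iff h q).mp hp).2
    rw [walkWeight_cons]
    refine ⟨fun huA => ?_, fun huA hyp => ?_⟩
    · by_cases hu'A : u' ∈ A
      · rcases hA ⟨huA, u', hu'A, h.symm⟩ with rfl | rfl
        · have hyx := (ih hxy.symm hy hx (by rwa [Set.pair_comm])).2 hu'A hu
          rw [crossingWeight_swap, walkWeight_neg] at hyx
          rw [crossingWeight_eq_one hu'A hxy hy]
          linarith
        · rw [crossingWeight_eq_neg_one hu'A hxy hx, (ih hxy hx hy hA).2 hu'A hu]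
          ring
      · rw [crossingWeight_of_notMem_of_notMem huA hu'A, (ih hxy hx hy hA).1 hu'A,
          add_zero]
    · by_cases hu'A : u' ∈ A
      · rw [crossingWeight_of_mem_of_mem huA hu'A hx hy,
          (ih hxy hx hy hA).2 hu'A (fun h' => hyp (by simp [h'])), zero_add]
      · rcases hA ⟨hu'A, u, huA, h⟩ with rfl | rfl
        · rw [Sym2.eq_swap, crossingWeight_eq_one huA hxy hy, (ih hxy hx hy hA).1 hu'A,
            add_zero]
        · exact absurd (by simp) hyp

end CrossingWeight

lemma Finset.exists_subset_pair_of_card_le_two {α : Type*} {T : Set α} {S : Finset α}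
    (hTS : T ⊆ S) (hS : S.card ≤ 2) {x z : α} (hx : x ∈ T) (hz : z ≠ x) :
    ∃ y ∈ insert z T, y ≠ x ∧ T ⊆ {x, y} := by
  by_cases h : ∃ y ∈ T, y ≠ x
  · obtain ⟨y, hy, hyx⟩ := h
    refine ⟨y, Or.inr hy, hyx, fun t ht => ?_⟩
    by_contra htxy
    simp only [Set.mem_insert_iff, Set.mem_singleton_iff, not_or] at htxy
    have : 2 < S.card :=
      Finset.two_lt_card.mpr ⟨x, hTS hx, y, hTS hy, t, hTS ht, hyx.symm, Ne.symm htxy.1,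
        Ne.symm htxy.2⟩
    omega
  · push Not at h
    exact ⟨z, Set.mem_insert z T, hz, fun t ht => Or.inl (h t ht)⟩

section Monitors

variable {V : Type*} {G : SimpleGraph V} {m1 m2 : V}

lemma not_identifiable_of_outerBoundary_subset {A : Set V} (hm1 : m1 ∉ A) (hm2 : m2 ∉ A)
    {x y a : V} (hxy : x ≠ y) (hx : x ∉ A) (hy : y ∉ A) (hA : G.outerBoundary A ⊆ {x, y})
    (ha : a ∈ A) : ¬Identifiable G m1 m2 s(x, a) := by
  intro hid
  have h := hid (crossingWeight A x y) 0 fun p hp => by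
    rw [(walkWeight_crossingWeight p hp hm2 hxy hx hy hA).1 hm1]
    simp [walkWeight, Pi.zero_def]
  rw [crossingWeight_eq_one ha hxy hy] at h
  exact one_ne_zero h

theorem monitors_mem_of_outerBoundary_subset (hG : G.Connected) (hm : m1 ≠ m2)
    (hnadj : ¬G.Adj m1 m2) (hH : (G.induce {v | v ≠ m1 ∧ v ≠ m2}).Connected)
    (hid : ∀ e ∈ G.edgeSet, (∀ x ∈ e, x ≠ m1 ∧ x ≠ m2) → Identifiable G m1 m2 e)
    {A : Set V} (hA : A.Nonempty) (hm1 : m1 ∉ A) (hm2 : m2 ∉ A) {S : Finset V}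
    (hS : S.card ≤ 2) (hAS : G.outerBoundary A ⊆ S) : m1 ∈ S ∧ m2 ∈ S := by
  have hA_int : ∀ a ∈ A, a ≠ m1 ∧ a ≠ m2 := fun a ha => ⟨ne_of_mem_of_not_mem ha hm1,
    ne_of_mem_of_not_mem ha hm2⟩
  by_cases hint : ∃ x ∈ G.outerBoundary A, x ≠ m1 ∧ x ≠ m2
  · obtain ⟨x, hxB, hx⟩ := hint
    have ⟨hxA, a, ha, hax⟩ := hxB
    obtain ⟨y, hyB, hxy, hAxy⟩ := Finset.exists_subset_pair_of_card_le_two hAS hS hxB hx.1.symm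
    have hyA : y ∉ A := by
      rcases hyB with rfl | hyB
      exacts [hm1, hyB.1]
    refine absurd (hid s(x, a) hax.symm ?_)
      (not_identifiable_of_outerBoundary_subset hm1 hm2 hxy.symm hxA hyA hAxy ha)
    simp only [Sym2.mem_iff]
    rintro z (rfl | rfl)
    exacts [hx, hA_int z ha]
  · push Not at hint
    have hIA : {v | v ≠ m1 ∧ v ≠ m2} ⊆ A := by
      refine subset_of_induce_preconnected hH.preconnected ?_ ?_
      · obtain ⟨a, ha⟩ := hA
        exact ⟨a, ha, hA_int a ha⟩
      · exact Set.disjoint_left.mpr fun b hb hbI => hbI.2 (hint b hb hbI.1)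
    have : Nontrivial V := ⟨m1, m2, hm⟩
    have hmon : ∀ m, m ∉ A → m = m1 ∨ m = m2 → m ∈ S := by
      intro m hmA hm'
      obtain ⟨z, hmz⟩ := hG.preconnected.exists_adj_of_nontrivial m
      have hzI : z ≠ m1 ∧ z ≠ m2 := by
        rcases hm' with rfl | rfl
        · exact ⟨hmz.ne', fun h => hnadj (h ▸ hmz)⟩
        · exact ⟨fun h => hnadj (h ▸ hmz.symm), hmz.ne'⟩
      exact hAS ⟨hmA, z, hIA hzI, hmz.symm⟩
    exact ⟨hmon m1 hm1 (.inl rfl), hmon m2 hm2 (.inr rfl)⟩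

end Monitors

/-- If G is finite, connected, with ≥ 4 vertices, monitors m1 ≠ m2,
m1m2 ∉ E(G), the interior graph G − m1 − m2 is (nonempty and) connected, and every
interior link is identifiable, then G + m1m2 is 3-vertex-connected. -/
theorem all_interior_identifiable_implies_three_connected {V : Type*} [Fintype V] [DecidableEq V]
    (G : SimpleGraph V) (hG : G.Connected) (hcard : 4 ≤ Fintype.card V)
    (m1 m2 : V) (hm : m1 ≠ m2) (hnadj : ¬ G.Adj m1 m2)
    (hH : (G.induce {v | v ≠ m1 ∧ v ≠ m2}).Connected)
    (hid : ∀ e ∈ G.edgeSet, (∀ x ∈ e, x ≠ m1 ∧ x ≠ m2) → Identifiable G m1 m2 e) :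
    KVertexConnected (G ⊔ SimpleGraph.fromEdgeSet {s(m1, m2)}) 3 := by
  set G' := G ⊔ SimpleGraph.fromEdgeSet {s(m1, m2)}
  refine ⟨by omega, fun S hS => ?_⟩
  by_cases hmS : m1 ∈ S ∧ m2 ∈ S
  · have hS_eq : S = {m1, m2} := (Finset.eq_of_subset_of_card_le
      (Finset.insert_subset hmS.1 (Finset.singleton_subset_iff.mpr hmS.2))
      (by rw [Finset.card_pair hm]; omega)).symm
    have hSc : (↑Sᶜ : Set V) = {v | v ≠ m1 ∧ v ≠ m2} := by ext v; simp [hS_eq, and_comm]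
    rwa [hSc, induce_sup_fromEdgeSet_of_notMem (fun h => h.1 rfl)]
  by_contra hdisc
  obtain ⟨b, hbS, hb⟩ : ∃ b ∉ S, b = m1 ∨ b = m2 := by
    by_cases h1 : m1 ∈ S
    exacts [⟨m2, fun h2 => hmS ⟨h1, h2⟩, .inr rfl⟩, ⟨m1, h1, .inl rfl⟩]
  obtain ⟨A, hA, hbA, hAb⟩ :=
    exists_outerBoundary_subset_compl_of_not_connected (by simpa using hbS) hdisc
  have hG'm : G'.Adj m1 m2 := Or.inr (by simp [fromEdgeSet_adj, hm])
  have hmA : ∀ m, m = m1 ∨ m = m2 → m ∉ A := by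
    rintro m hm' hmA
    have hmb : m ≠ b := fun h => hbA (h ▸ hmA)
    have hG'mb : G'.Adj m b := by
      rcases hm' with rfl | rfl <;> rcases hb with rfl | rfl
      exacts [absurd rfl hmb, hG'm, hG'm.symm, absurd rfl hmb]
    exact hAb ⟨hbA, m, hmA, hG'mb⟩ (by simpa using hbS)
  refine hmS (monitors_mem_of_outerBoundary_subset hG hm hnadj hH hid hA
    (hmA m1 (.inl rfl)) (hmA m2 (.inr rfl)) (by omega) ?_)
  exact (outerBoundary_mono le_sup_left A).trans (by simpa using hAb)
end

section
/- Let G be a finite connected simple graph with at least 4 vertices and two distinguished vertices m1 ≠ m2 (the monitors) with m1m2 ∉ E(G), and suppose the interior graph H = G − m1 − m2 is connected. Then G + m1m2 (the graph obtained by adding the edge m1m2) is 3-vertex-connected if and only if for every pair of distinct vertices u1, u2 of G, either G − u1 − u2 is connected, or every connected component of G − u1 − u2 contains m1 or m2. -/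
open SimpleGraph

/-!
Because `4 ≤ |V|`, any set of at most two deleted vertices missing two given vertices `a, b`
extends to a pair missing `a, b`; so `G + m1m2` is 3-connected iff `G + m1m2 − u1 − u2` is
connected for all `u1 ≠ u2`. In a graph `H ⊔ K`, a vertex whose `H`-component meets no `K`-edge
has the same component in `H ⊔ K`. Hence if some component of `G − u1 − u2` contains no monitor,
the extra edge `m1m2` cannot help and `G − u1 − u2` itself must be connected; conversely, if every
component contains a monitor, the edge `m1m2` joins all of them.
-/

open Finset

namespace SimpleGraph

variable {V : Type*}

theorem Reachable.of_sup_of_forall_not_adj {H K : SimpleGraph V} {x y : V}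
    (hK : ∀ z, H.Reachable x z → ∀ w, ¬K.Adj z w) (h : (H ⊔ K).Reachable x y) :
    H.Reachable x y := by
  rw [reachable_iff_reflTransGen] at h ⊢
  induction h with
  | refl => rfl
  | tail _ hzw ih =>
    exact ih.tail (hzw.resolve_right (hK _ (reachable_iff_reflTransGen _ _ |>.mpr ih) _))

theorem connected_induce_sup_edge_iff {G : SimpleGraph V} {m1 m2 : V} {s : Set V}
    (hs : s.Nonempty) :
    ((G ⊔ edge m1 m2).induce s).Connected ↔ (G.induce s).Connected ∨
      ∀ x : s, ∃ y : s, ((y : V) = m1 ∨ (y : V) = m2) ∧ (G.induce s).Reachable x y := by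
  change (G.induce s ⊔ (edge m1 m2).induce s).Connected ↔ _
  have : Nonempty s := hs.to_subtype
  constructor
  · intro hconn
    by_contra! ⟨hnot, x, hx⟩
    have hreach (y : s) : (G.induce s).Reachable x y :=
      (hconn.preconnected x y).of_sup_of_forall_not_adj fun z hz w hzw =>
        hx z (((edge_adj m1 m2 z w).mp hzw).1.imp And.left And.left) hz
    exact hnot ⟨fun a b => (hreach a).symm.trans (hreach b)⟩
  · rintro (hconn | hmon)
    · exact hconn.mono le_sup_left
    · refine ⟨fun a b => ?_⟩
      obtain ⟨ya, hya, hra⟩ := hmon a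
      obtain ⟨yb, hyb, hrb⟩ := hmon b
      have hmid : (G.induce s ⊔ (edge m1 m2).induce s).Reachable ya yb := by
        rcases eq_or_ne ya yb with rfl | hne
        · rfl
        have hne' : (ya : V) ≠ yb := Subtype.coe_ne_coe.mpr hne
        refine Adj.reachable (Or.inr ((edge_adj m1 m2 ya yb).mpr ⟨?_, hne'⟩))
        rcases hya with h | h <;> rcases hyb with h' | h' <;> simp_all
      exact ((hra.mono le_sup_left).trans hmid).trans (hrb.mono le_sup_left).symm

end SimpleGraph

theorem kVertexConnected_succ_iff {V : Type*} [Fintype V] [DecidableEq V] {G : SimpleGraph V}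
    {k : ℕ} (hk : k + 2 ≤ Fintype.card V) :
    KVertexConnected G (k + 1) ↔
      ∀ S : Finset V, #S = k → (G.induce (↑Sᶜ : Set V)).Connected := by
  refine ⟨fun ⟨_, h⟩ S hS => h S (by omega), fun h => ⟨by omega, fun S hS => ?_⟩⟩
  have : Nonempty (↑Sᶜ : Set V) := by
    obtain ⟨v, hv⟩ : (Sᶜ).Nonempty := card_pos.mp (by rw [card_compl]; omega)
    exact ⟨⟨v, hv⟩⟩
  refine ⟨fun a b => ?_⟩
  have hab : k ≤ #({a.1, b.1}ᶜ : Finset V) := by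
    rw [card_compl]
    have := card_le_two (a := a.1) (b := b.1)
    omega
  obtain ⟨T, hST, hTab, hT⟩ := exists_subsuperset_card_eq (s := S) (t := {a.1, b.1}ᶜ)
    (fun v hv => by grind [mem_compl]) (by omega) hab
  have hsub : (↑Tᶜ : Set V) ⊆ ↑Sᶜ := by simpa using hST
  have ha : a.1 ∈ (↑Tᶜ : Set V) := by grind [mem_compl, coe_compl]
  have hb : b.1 ∈ (↑Tᶜ : Set V) := by grind [mem_compl, coe_compl]
  exact ((h T hT).preconnected ⟨a, ha⟩ ⟨b, hb⟩).map (SimpleGraph.induceHomOfLE G hsub).toHom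

theorem Finset.coe_compl_pair {V : Type*} [Fintype V] [DecidableEq V] (a b : V) :
    (↑({a, b} : Finset V)ᶜ : Set V) = {v | v ≠ a ∧ v ≠ b} := by
  ext
  simp [and_comm]

theorem Finset.forall_card_eq_two_iff {V : Type*} [DecidableEq V] {P : Finset V → Prop} :
    (∀ S : Finset V, #S = 2 → P S) ↔ ∀ u1 u2 : V, u1 ≠ u2 → P {u1, u2} := by
  simp only [card_eq_two, forall_exists_index, and_imp]
  grind

theorem three_connected_iff_components_have_monitor_general {V : Type*} [Fintype V] [DecidableEq V]
    (G : SimpleGraph V) (hcard : 4 ≤ Fintype.card V)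
    (m1 m2 : V) :
    KVertexConnected (G ⊔ SimpleGraph.fromEdgeSet {s(m1, m2)}) 3 ↔
    ∀ u1 u2 : V, u1 ≠ u2 →
      ((G.induce {v | v ≠ u1 ∧ v ≠ u2}).Connected ∨
       ∀ x : {v // v ≠ u1 ∧ v ≠ u2}, ∃ y : {v // v ≠ u1 ∧ v ≠ u2},
         ((y : V) = m1 ∨ (y : V) = m2) ∧
         (G.induce {v | v ≠ u1 ∧ v ≠ u2}).Reachable x y) := by
  rw [kVertexConnected_succ_iff (k := 2) hcard, forall_card_eq_two_iff]
  refine forall₂_congr fun u1 u2 => imp_congr_right fun _ => ?_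
  have hne : ({v | v ≠ u1 ∧ v ≠ u2} : Set V).Nonempty := by
    rw [← coe_compl_pair, coe_nonempty, ← card_pos, card_compl]
    have := card_le_two (a := u1) (b := u2)
    omega
  rw [coe_compl_pair]
  exact SimpleGraph.connected_induce_sup_edge_iff hne

/-- Under the standing assumptions, G + m1m2 is 3-vertex-connected iff
for all distinct u1, u2, either G − u1 − u2 is connected or every connected component
of G − u1 − u2 contains a monitor. -/
theorem three_connected_iff_components_have_monitor {V : Type*} [Fintype V] [DecidableEq V]
    (G : SimpleGraph V) (hG : G.Connected) (hcard : 4 ≤ Fintype.card V)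
    (m1 m2 : V) (hm : m1 ≠ m2) (hnadj : ¬ G.Adj m1 m2)
    (hH : (G.induce {v | v ≠ m1 ∧ v ≠ m2}).Connected) :
    KVertexConnected (G ⊔ SimpleGraph.fromEdgeSet {s(m1, m2)}) 3 ↔
    ∀ u1 u2 : V, u1 ≠ u2 →
      ((G.induce {v | v ≠ u1 ∧ v ≠ u2}).Connected ∨
       ∀ x : {v // v ≠ u1 ∧ v ≠ u2}, ∃ y : {v // v ≠ u1 ∧ v ≠ u2},
         ((y : V) = m1 ∨ (y : V) = m2) ∧
         (G.induce {v | v ≠ u1 ∧ v ≠ u2}).Reachable x y) :=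
  three_connected_iff_components_have_monitor_general G hcard m1 m2
end

section
/- Let G be a finite connected simple graph with two distinguished vertices m1 ≠ m2 (the monitors), m1m2 ∉ E(G), such that G + m1m2 (the graph obtained by adding the edge m1m2) is 3-vertex-connected. Let vw ∈ E(G) be an interior link (neither v nor w is a monitor) such that G − vw is 2-edge-connected. Then there exist two cycles C1 and C2 in G, both containing the edge vw, such that |V(C1) ∩ V(C2)| ≤ 3. -/
open SimpleGraph

/-!
Let `H = G - vw`. Closing a `v`–`w` path of `H` with the edge `vw` gives a cycle through `vw`,
so it suffices to find two `v`–`w` paths in `H` sharing at most one vertex besides `v` and `w`.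
If no vertex separates `v` from `w` in `H`, Whitney's argument gives two internally disjoint
paths. Otherwise the separating vertex `z` is unique, and gluing two internally disjoint
`v`–`z` paths to two internally disjoint `z`–`w` paths gives paths meeting only in `v`, `z`, `w`.

Uniqueness: let `z₁`, `z₂` both separate, `z₁` coming first on the `v`–`w` paths. One monitor
lies on the `v`-side of `z₁` and the other on the `w`-side of `z₂`, and then 3-connectivity of
`G + m₁m₂` puts every vertex other than `z₁`, `z₂` on one of these two sides. But on a `v`–`w`
path of `H` avoiding the edge `z₁z₂` (2-edge-connectivity), the vertex after `z₁` is on neither.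
-/

namespace SimpleGraph

variable {V : Type*} {K : SimpleGraph V} {a b c x y z : V}

def ReachableAvoiding (K : SimpleGraph V) (x a b : V) : Prop :=
  ∃ p : K.Walk a b, x ∉ p.support

def Separates (K : SimpleGraph V) (z a b : V) : Prop :=
  z ≠ a ∧ z ≠ b ∧ ¬K.ReachableAvoiding z a b

lemma Separates.mem_support (hz : K.Separates z a b) (p : K.Walk a b) : z ∈ p.support :=
  by_contra fun h ↦ hz.2.2 ⟨p, h⟩

namespace ReachableAvoiding

lemma refl (h : a ≠ x) : K.ReachableAvoiding x a a :=
  ⟨.nil, by simpa using h.symm⟩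

lemma symm (h : K.ReachableAvoiding x a b) : K.ReachableAvoiding x b a :=
  let ⟨p, hp⟩ := h
  ⟨p.reverse, by simpa using hp⟩

lemma trans (hab : K.ReachableAvoiding x a b) (hbc : K.ReachableAvoiding x b c) :
    K.ReachableAvoiding x a c :=
  let ⟨p, hp⟩ := hab
  let ⟨q, hq⟩ := hbc
  ⟨p.append q, by simp [Walk.mem_support_append_iff, hp, hq]⟩

lemma ne_right (h : K.ReachableAvoiding x a b) : b ≠ x := by
  rintro rfl
  obtain ⟨p, hp⟩ := h
  exact hp p.end_mem_support

lemma concat (h : K.ReachableAvoiding x a b) (hbc : K.Adj b c) (hc : c ≠ x) :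
    K.ReachableAvoiding x a c :=
  h.trans ⟨hbc.toWalk, by simp [h.ne_right.symm, hc.symm]⟩

lemma exists_isPath [DecidableEq V] (h : K.ReachableAvoiding x a b) :
    ∃ p : K.Walk a b, p.IsPath ∧ x ∉ p.support :=
  let ⟨p, hp⟩ := h
  ⟨p.bypass, p.bypass_isPath, fun h ↦ hp (p.support_bypass_subset_support h)⟩

lemma split [DecidableEq V] (h : K.ReachableAvoiding x a b) (hz : ¬K.ReachableAvoiding z a b) :
    K.ReachableAvoiding x a z ∧ K.ReachableAvoiding x z b := by
  obtain ⟨p, hp⟩ := h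
  have hzp : z ∈ p.support := by_contra fun h ↦ hz ⟨p, h⟩
  exact ⟨⟨p.takeUntil z hzp, fun h ↦ hp (p.support_takeUntil_subset_support hzp h)⟩,
    ⟨p.dropUntil z hzp, fun h ↦ hp (p.support_dropUntil_subset_support hzp h)⟩⟩

end ReachableAvoiding

namespace Walk

lemma IsPath.append_of_forall_mem {p : K.Walk a b} {q : K.Walk b c} (hp : p.IsPath)
    (hq : q.IsPath) (h : ∀ y ∈ p.support, y ∈ q.support → y = b) : (p.append q).IsPath := by
  rw [isPath_def, support_append, List.nodup_append]
  refine ⟨hp.support_nodup, hq.support_nodup.sublist q.support.tail_sublist, ?_⟩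
  rintro y hyp y' hyq rfl
  have hqb := hq.support_nodup
  rw [← cons_tail_support] at hqb
  exact (List.nodup_cons.mp hqb).1 (h y hyp (List.mem_of_mem_tail hyq) ▸ hyq)

variable [DecidableEq V]

lemma IsPath.reachableAvoiding_end {p : K.Walk a b} (hp : p.IsPath) (hy : y ∈ p.support)
    (hyb : y ≠ b) : K.ReachableAvoiding b a y :=
  ⟨p.takeUntil y hy, endpoint_notMem_support_takeUntil hp hy hyb.symm⟩

lemma IsPath.reachableAvoiding_start {p : K.Walk a b} (hp : p.IsPath) (hy : y ∈ p.support)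
    (hya : y ≠ a) : K.ReachableAvoiding a y b :=
  (hp.reverse.reachableAvoiding_end (by simpa using hy) hya).symm

/-- On a path from `a` to `b`, a vertex `y ≠ c` lies either before or after `c`. -/
lemma IsPath.reachableAvoiding_or {p : K.Walk a b} (hp : p.IsPath) (hc : c ∈ p.support)
    (hy : y ∈ p.support) (hyc : y ≠ c) :
    (K.ReachableAvoiding c a y ∧ K.ReachableAvoiding y c b) ∨
      (K.ReachableAvoiding y a c ∧ K.ReachableAvoiding c y b) := by
  have hsplit : ((p.takeUntil c hc).append (p.dropUntil c hc)).IsPath := by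
    rwa [p.take_spec hc]
  by_cases hyt : y ∈ (p.takeUntil c hc).support
  · exact .inl ⟨(hp.takeUntil hc).reachableAvoiding_end hyt hyc,
      p.dropUntil c hc, fun hyd ↦ hsplit.ne_of_mem_support_of_append hyc hyt hyd rfl⟩
  · have hyd : y ∈ (p.dropUntil c hc).support := by
      rw [← p.take_spec hc, mem_support_append_iff] at hy
      exact hy.resolve_left hyt
    exact .inr ⟨⟨p.takeUntil c hc, hyt⟩, (hp.dropUntil hc).reachableAvoiding_start hyd hyc⟩

lemma IsPath.reachableAvoiding_of_mem {p : K.Walk a b} (hp : p.IsPath) (hy : y ∈ p.support)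
    (hxy : x ≠ y) (hab : x ≠ b → K.ReachableAvoiding x a b) :
    K.ReachableAvoiding x a y := by
  by_cases hx : x ∈ p.support
  · rcases hp.reachableAvoiding_or hx hy hxy.symm with ⟨h, -⟩ | ⟨-, h⟩
    · exact h
    · exact (hab h.ne_right.symm).trans h.symm
  · exact ⟨p.takeUntil y hy, fun h ↦ hx (p.support_takeUntil_subset_support hy h)⟩

lemma exists_paths_of_reroute {P₁ P₂ : K.Walk a x} (hP₁ : P₁.IsPath) (hP₂ : P₂.IsPath)
    (hP : ∀ y ∈ P₁.support, y ∈ P₂.support → y = a ∨ y = x) (hxb : K.Adj x b)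
    (hb : b ∉ P₂.support) (hc : c ∈ P₁.support) (hcx : c ≠ x) {r : K.Walk c b} (hr : r.IsPath)
    (hrP : ∀ y ∈ r.support, y ∈ P₁.support ∨ y ∈ P₂.support → y = c) :
    ∃ P Q : K.Walk a b, P.IsPath ∧ Q.IsPath ∧
      ∀ y ∈ P.support, y ∈ Q.support → y = a ∨ y = b := by
  have hx : x ∉ (P₁.takeUntil c hc).support := endpoint_notMem_support_takeUntil hP₁ hc hcx.symm
  refine ⟨(P₁.takeUntil c hc).append r, P₂.concat hxb,
    (hP₁.takeUntil hc).append_of_forall_mem hr fun y hy hyr ↦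
      hrP y hyr (.inl (P₁.support_takeUntil_subset_support hc hy)),
    hP₂.concat hb hxb, fun y hyP hyQ ↦ ?_⟩
  rw [support_concat, List.mem_append, List.mem_singleton] at hyQ
  rcases hyQ with hy₂ | rfl
  · rw [mem_support_append_iff] at hyP
    rcases hyP with hy₁ | hyr
    · exact .inl ((hP y (P₁.support_takeUntil_subset_support hc hy₁) hy₂).resolve_right
        fun h ↦ hx (h ▸ hy₁))
    · obtain rfl := hrP y hyr (.inr hy₂)
      exact .inl ((hP y hc hy₂).resolve_right hcx)
  · exact .inr rfl

theorem exists_internally_disjoint_paths (p : K.Walk a b)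
    (hp : ∀ y ∈ p.support, ∀ x, x ≠ a → x ≠ y → K.ReachableAvoiding x a y) (hab : a ≠ b) :
    ∃ P Q : K.Walk a b, P.IsPath ∧ Q.IsPath ∧
      ∀ y ∈ P.support, y ∈ Q.support → y = a ∨ y = b := by
  induction p using concatRec with
  | Hnil => exact absurd rfl hab
  | @Hconcat a x b p hxb ih =>
    by_cases hxa : x = a
    · subst hxa
      exact ⟨hxb.toWalk, hxb.toWalk, .of_adj hxb, .of_adj hxb, by simp⟩
    obtain ⟨P₁, P₂, hP₁, hP₂, hP⟩ :=
      ih (fun y hy ↦ hp y (by simp [support_concat, hy])) (Ne.symm hxa)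
    have hbx : b ≠ x := hxb.ne.symm
    have hP' : ∀ y ∈ P₂.support, y ∈ P₁.support → y = a ∨ y = x := fun y h₂ h₁ ↦ hP y h₁ h₂
    by_cases hb₁ : b ∈ P₁.support
    · exact exists_paths_of_reroute hP₁ hP₂ hP hxb
        (fun hb₂ ↦ (hP b hb₁ hb₂).elim (Ne.symm hab) hbx) hb₁ hbx .nil (by simp)
    by_cases hb₂ : b ∈ P₂.support
    · exact exists_paths_of_reroute hP₂ hP₁ hP' hxb hb₁ hb₂ hbx .nil (by simp)
    obtain ⟨R, hR, hxR⟩ := (hp b (by simp [support_concat]) x hxa hbx.symm).exists_isPath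
    -- the first vertex of `R` seen from `b` that lies on `P₁` or `P₂`
    obtain ⟨c, hcS, hcR, hfirst⟩ := R.reverse.exists_mem_support_forall_mem_support_imp_eq
      (P₁.support ++ P₂.support).toFinset ⟨a, by simp⟩
    have hcx : c ≠ x := by
      rintro rfl
      exact hxR (by simpa using hcR)
    have hr := (hR.reverse.takeUntil hcR).reverse
    have hrP : ∀ y ∈ (R.reverse.takeUntil c hcR).reverse.support,
        y ∈ P₁.support ∨ y ∈ P₂.support → y = c := fun y hy hyP ↦
      hfirst y (by simpa using hyP) (by simpa using hy)
    rw [List.mem_toFinset, List.mem_append] at hcS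
    rcases hcS with hc₁ | hc₂
    · exact exists_paths_of_reroute hP₁ hP₂ hP hxb hb₂ hc₁ hcx hr hrP
    · exact exists_paths_of_reroute hP₂ hP₁ hP' hxb hb₁ hc₂ hcx hr fun y hy h ↦ hrP y hy h.symm

lemma IsPath.exists_adj_reachableAvoiding {u : V} {p : K.Walk a b} (hp : p.IsPath)
    (hz : z ∈ p.support) (hzb : z ≠ b) (hu : s(z, u) ∉ p.edges) :
    ∃ y, K.Adj z y ∧ y ≠ u ∧ K.ReachableAvoiding z y b := by
  have hq := hp.dropUntil hz
  have hqp := p.edges_dropUntil_subset_edges hz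
  generalize p.dropUntil z hz = q at hq hqp
  cases q with
  | nil => exact absurd rfl hzb
  | cons hzy q =>
    refine ⟨_, hzy, ?_, q, ((cons_isPath_iff _ _).mp hq).2⟩
    rintro rfl
    exact hu (hqp (by simp))

end Walk

section Separation

variable [DecidableEq V]

open Walk

theorem exists_internally_disjoint_paths_of_forall_reachableAvoiding (hab : a ≠ b)
    (hreach : K.Reachable a b) (h : ∀ x, x ≠ a → x ≠ b → K.ReachableAvoiding x a b) :
    ∃ P Q : K.Walk a b, P.IsPath ∧ Q.IsPath ∧
      ∀ y ∈ P.support, y ∈ Q.support → y = a ∨ y = b := by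
  obtain ⟨p, hp⟩ := hreach.exists_isPath
  exact exists_internally_disjoint_paths p
    (fun y hy x hxa hxy ↦ hp.reachableAvoiding_of_mem hy hxy (h x hxa)) hab

theorem exists_paths_of_separates (hreach : K.Reachable a b) (hz : K.Separates z a b)
    (h : ∀ x, x ≠ a → x ≠ b → x ≠ z → K.ReachableAvoiding x a b) :
    ∃ P Q : K.Walk a b, P.IsPath ∧ Q.IsPath ∧
      ∀ y ∈ P.support, y ∈ Q.support → y = a ∨ y = b ∨ y = z := by
  obtain ⟨t, ht⟩ := hreach.exists_isPath
  have hzt := hz.mem_support t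
  obtain ⟨hza, hzb, hz⟩ := hz
  obtain ⟨A₁, A₂, hA₁, hA₂, hA⟩ := exists_internally_disjoint_paths_of_forall_reachableAvoiding
    hza.symm ⟨t.takeUntil z hzt⟩ fun x hxa hxz ↦ by
      by_cases hxb : x = b
      · exact hxb ▸ ht.reachableAvoiding_end hzt hzb
      · exact ((h x hxa hxb hxz).split hz).1
  obtain ⟨B₁, B₂, hB₁, hB₂, hB⟩ := exists_internally_disjoint_paths_of_forall_reachableAvoiding
    hzb ⟨t.dropUntil z hzt⟩ fun x hxz hxb ↦ by
      by_cases hxa : x = a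
      · exact hxa ▸ ht.reachableAvoiding_start hzt hza
      · exact ((h x hxa hxb hxz).split hz).2
  have hAB : ∀ {A : K.Walk a z} {B : K.Walk z b}, A.IsPath → B.IsPath →
      ∀ y ∈ A.support, y ∈ B.support → y = z := fun hA hB y hyA hyB ↦
    by_contra fun hyz ↦ hz ((hA.reachableAvoiding_end hyA hyz).trans
      (hB.reachableAvoiding_start hyB hyz))
  refine ⟨A₁.append B₁, A₂.append B₂, hA₁.append_of_forall_mem hB₁ (hAB hA₁ hB₁),
    hA₂.append_of_forall_mem hB₂ (hAB hA₂ hB₂), fun y hy₁ hy₂ ↦ ?_⟩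
  rw [mem_support_append_iff] at hy₁ hy₂
  rcases hy₁ with hy₁ | hy₁ <;> rcases hy₂ with hy₂ | hy₂
  · exact (hA y hy₁ hy₂).imp_right .inr
  · exact .inr (.inr (hAB hA₁ hB₂ y hy₁ hy₂))
  · exact .inr (.inr (hAB hA₂ hB₁ y hy₂ hy₁))
  · exact .inr (hB y hy₁ hy₂).symm

theorem exists_paths_of_separates_subsingleton (hab : a ≠ b) (hreach : K.Reachable a b)
    (h : ∀ z₁ z₂, K.Separates z₁ a b → K.Separates z₂ a b → z₁ = z₂) :
    ∃ z, ∃ P Q : K.Walk a b, P.IsPath ∧ Q.IsPath ∧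
      ∀ y ∈ P.support, y ∈ Q.support → y = a ∨ y = b ∨ y = z := by
  by_cases hsep : ∃ z, K.Separates z a b
  · obtain ⟨z, hz⟩ := hsep
    exact ⟨z, exists_paths_of_separates hreach hz fun x hxa hxb hxz ↦
      by_contra fun hx ↦ hxz (h x z ⟨hxa, hxb, hx⟩ hz)⟩
  · obtain ⟨P, Q, hP, hQ, hPQ⟩ :=
      exists_internally_disjoint_paths_of_forall_reachableAvoiding hab hreach
        fun x hxa hxb ↦ by_contra fun hx ↦ hsep ⟨x, hxa, hxb, hx⟩
    exact ⟨a, P, Q, hP, hQ, fun y hy₁ hy₂ ↦ (hPQ y hy₁ hy₂).imp_right .inl⟩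

end Separation

end SimpleGraph

lemma KVertexConnected.mem_of_forall_adj {V : Type*} [Fintype V] [DecidableEq V]
    {K : SimpleGraph V} {k : ℕ} (hK : KVertexConnected K k) {X : Finset V} (hX : X.card < k)
    {S : Set V} (hS : ∀ c d, K.Adj c d → c ∈ S → c ∉ X → d ∉ X → d ∈ S) {a b : V}
    (ha : a ∈ S) (haX : a ∉ X) (hbX : b ∉ X) : b ∈ S := by
  by_contra hb
  obtain ⟨p⟩ := (hK.2 X hX).preconnected ⟨a, by simpa using haX⟩ ⟨b, by simpa using hbX⟩
  obtain ⟨⟨⟨c, d⟩, hcd⟩, -, hc, hd⟩ := p.exists_boundary_dart (Subtype.val ⁻¹' S) ha hb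
  exact hd (hS c d (by simpa using hcd) hc (by simpa using c.2) (by simpa using d.2))

lemma KEdgeConnected.exists_walk_notMem_edges {V : Type*} [Fintype V] {K : SimpleGraph V}
    (hK : KEdgeConnected K 2) (a b : V) (e : Sym2 V) : ∃ p : K.Walk a b, e ∉ p.edges := by
  induction e with
  | h x y =>
    have hconn := hK.2 {s(x, y)} (by simp)
    rw [Finset.coe_singleton] at hconn
    exact reachable_deleteEdges_iff_exists_walk.mp (hconn.preconnected a b)

namespace SimpleGraph

variable {V : Type*}

section KVertexConnected

variable [Fintype V] [DecidableEq V] {K K' : SimpleGraph V} {v w m₁ m₂ y z z₁ z₂ : V}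

lemma reachableAvoiding_monitor_of_kVertexConnected (hK' : KVertexConnected K' 3)
    (hedge : ∀ c d, K'.Adj c d → K.Adj c d ∨ s(c, d) = s(v, w) ∨ s(c, d) = s(m₁, m₂))
    (hm : m₁ ≠ m₂) (hv₁ : v ≠ m₁) (hv₂ : v ≠ m₂) (hvw : v ≠ w) (hzw : z ≠ w) :
    K.ReachableAvoiding z w m₁ ∨ K.ReachableAvoiding z w m₂ := by
  by_contra! h
  obtain ⟨m, hm', hmz⟩ : ∃ m, (m = m₁ ∨ m = m₂) ∧ m ≠ z := by
    by_cases hz : m₁ = z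
    · exact ⟨m₂, .inr rfl, hz ▸ hm.symm⟩
    · exact ⟨m₁, .inl rfl, hz⟩
  have hmv : m ≠ v := by rcases hm' with rfl | rfl <;> tauto
  have hS : m ∈ {y | K.ReachableAvoiding z w y} := by
    refine hK'.mem_of_forall_adj (X := {z, v}) (Finset.card_le_two.trans_lt (by norm_num))
      (fun c d hcd hc hcX hdX ↦ ?_) (.refl hzw.symm) (by simp [hzw.symm, hvw.symm])
      (by simp [hmz, hmv])
    simp only [Finset.mem_insert, Finset.mem_singleton, not_or] at hcX hdX
    rcases hedge c d hcd with hK | he | he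
    · exact hc.concat hK hdX.1
    · rcases Sym2.eq_iff.mp he with ⟨rfl, -⟩ | ⟨-, rfl⟩ <;> tauto
    · rcases Sym2.eq_iff.mp he with ⟨rfl, -⟩ | ⟨rfl, -⟩ <;> tauto
  rcases hm' with rfl | rfl <;> tauto

lemma reachableAvoiding_or_of_monitors (hK' : KVertexConnected K' 3)
    (hedge : ∀ c d, K'.Adj c d → K.Adj c d ∨ s(c, d) = s(v, w) ∨ s(c, d) = s(m₁, m₂))
    (hz₁v : z₁ ≠ v) (hz₂v : z₂ ≠ v) (hz₂w : z₂ ≠ w)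
    (hmon : ∀ m, m = m₁ ∨ m = m₂ → K.ReachableAvoiding z₁ v m ∨ K.ReachableAvoiding z₂ w m)
    (hy₁ : y ≠ z₁) (hy₂ : y ≠ z₂) : K.ReachableAvoiding z₁ v y ∨ K.ReachableAvoiding z₂ w y := by
  refine hK'.mem_of_forall_adj (X := {z₁, z₂}) (S := {y | _ ∨ _})
    (Finset.card_le_two.trans_lt (by norm_num)) (fun c d hcd hc _ hdX ↦ ?_)
    (.inl (.refl hz₁v.symm)) (by simp [hz₁v.symm, hz₂v.symm]) (by simp [hy₁, hy₂])
  simp only [Finset.mem_insert, Finset.mem_singleton, not_or] at hdX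
  rcases hedge c d hcd with hK | he | he
  · exact hc.imp (·.concat hK hdX.1) (·.concat hK hdX.2)
  · rcases Sym2.eq_iff.mp he with ⟨-, rfl⟩ | ⟨-, rfl⟩
    exacts [.inr (.refl hz₂w.symm), .inl (.refl hz₁v.symm)]
  · rcases Sym2.eq_iff.mp he with ⟨-, rfl⟩ | ⟨-, rfl⟩
    exacts [hmon _ (.inr rfl), hmon _ (.inl rfl)]

theorem Separates.unique (hK' : KVertexConnected K' 3)
    (hedge : ∀ c d, K'.Adj c d → K.Adj c d ∨ s(c, d) = s(v, w) ∨ s(c, d) = s(m₁, m₂))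
    (hm : m₁ ≠ m₂) (hv₁ : v ≠ m₁) (hv₂ : v ≠ m₂) (hw₁ : w ≠ m₁) (hw₂ : w ≠ m₂)
    (hbridge : ∀ e, ∃ p : K.Walk v w, e ∉ p.edges)
    (hs₁ : K.Separates z₁ v w) (hs₂ : K.Separates z₂ v w) : z₁ = z₂ := by
  by_contra h₁₂
  have hvw : v ≠ w := fun h ↦ hs₁.2.2 (h ▸ .refl hs₁.1.symm)
  obtain ⟨t₀, -⟩ := hbridge s(v, v)
  obtain ⟨t, ht⟩ := Reachable.exists_isPath ⟨t₀⟩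
  wlog hord : K.ReachableAvoiding z₂ v z₁ ∧ K.ReachableAvoiding z₁ z₂ w generalizing z₁ z₂
  · rcases ht.reachableAvoiding_or (hs₂.mem_support t) (hs₁.mem_support t) h₁₂ with h | h
    · exact hord h
    · exact this hs₂ hs₁ (Ne.symm h₁₂) h
  have ⟨hz₁v, hz₁w, hsep₁⟩ := hs₁
  have ⟨hz₂v, hz₂w, hsep₂⟩ := hs₂
  have hV : ∀ {y}, K.ReachableAvoiding z₁ v y → K.ReachableAvoiding z₂ v y := fun hy ↦
    by_contra fun h ↦ hsep₁ ((hy.split h).1.trans hord.2)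
  have hedge' : ∀ c d, K'.Adj c d → K.Adj c d ∨ s(c, d) = s(w, v) ∨ s(c, d) = s(m₁, m₂) :=
    fun c d hcd ↦ (hedge c d hcd).imp_right (.imp_left (·.trans Sym2.eq_swap))
  have hmon : ∀ m, m = m₁ ∨ m = m₂ →
      K.ReachableAvoiding z₁ v m ∨ K.ReachableAvoiding z₂ w m := by
    have hsep₂' : ∀ {m}, K.ReachableAvoiding z₁ v m → ¬K.ReachableAvoiding z₂ w m :=
      fun h h' ↦ hsep₂ ((hV h).trans h'.symm)
    rcases reachableAvoiding_monitor_of_kVertexConnected hK' hedge' hm hw₁ hw₂ hvw.symm hz₁v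
      with h | h <;>
    rcases reachableAvoiding_monitor_of_kVertexConnected hK' hedge hm hv₁ hv₂ hvw hz₂w
      with h' | h' <;>
    rintro m (rfl | rfl) <;> tauto
  obtain ⟨p, hp⟩ := hbridge s(z₁, z₂)
  obtain ⟨y, hz₁y, hy₂, hyw⟩ := p.bypass_isPath.exists_adj_reachableAvoiding
    (hs₁.mem_support _) hz₁w fun h ↦ hp (p.edges_bypass_subset_edges h)
  rcases reachableAvoiding_or_of_monitors hK' hedge hz₁v hz₂v hz₂w hmon hz₁y.ne' hy₂ with h | h
  · exact hsep₁ (h.trans hyw)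
  · exact hsep₂ (hord.1.trans (h.concat hz₁y.symm h₁₂).symm)

end KVertexConnected

section DeleteEdges

variable {G : SimpleGraph V} {v w m₁ m₂ c d : V}

lemma adj_of_sup_fromEdgeSet (h : (G ⊔ fromEdgeSet {s(m₁, m₂)}).Adj c d) :
    (G.deleteEdges {s(v, w)}).Adj c d ∨ s(c, d) = s(v, w) ∨ s(c, d) = s(m₁, m₂) := by
  simp only [sup_adj, fromEdgeSet_adj, Set.mem_singleton_iff, deleteEdges_adj] at h ⊢
  tauto

lemma exists_isCycle_cons_of_isPath (hvw : G.Adj v w) {p : (G.deleteEdges {s(v, w)}).Walk v w}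
    (hp : p.IsPath) :
    ∃ C : G.Walk w w, C.IsCycle ∧ s(v, w) ∈ C.edges ∧ C.support = w :: p.support := by
  refine ⟨.cons hvw.symm (p.mapLe (deleteEdges_le _)), ?_, by simp [Sym2.eq_swap], by simp⟩
  refine (Walk.cons_isCycle_iff _ _).mpr ⟨hp.mapLe _, fun h ↦ ?_⟩
  rw [Walk.edges_mapLe_eq_edges, Sym2.eq_swap (a := w)] at h
  simpa using p.edges_subset_edgeSet h

end DeleteEdges

end SimpleGraph

theorem two_cycles_through_interior_link_general {V : Type*} [Fintype V] [DecidableEq V]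
    (G : SimpleGraph V)
    (m1 m2 : V) (hm : m1 ≠ m2)
    (h3 : KVertexConnected (G ⊔ SimpleGraph.fromEdgeSet {s(m1, m2)}) 3)
    (v w : V) (hvw : G.Adj v w)
    (hint : v ≠ m1 ∧ v ≠ m2 ∧ w ≠ m1 ∧ w ≠ m2)
    (h2e : KEdgeConnected (G.deleteEdges {s(v, w)}) 2) :
    ∃ (a b : V) (C1 : G.Walk a a) (C2 : G.Walk b b),
      C1.IsCycle ∧ C2.IsCycle ∧ s(v, w) ∈ C1.edges ∧ s(v, w) ∈ C2.edges ∧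
      (C1.support.toFinset ∩ C2.support.toFinset).card ≤ 3 := by
  obtain ⟨hv₁, hv₂, hw₁, hw₂⟩ := hint
  have hbridge := h2e.exists_walk_notMem_edges v w
  obtain ⟨p, -⟩ := hbridge s(v, v)
  obtain ⟨z, P, Q, hP, hQ, hPQ⟩ := exists_paths_of_separates_subsingleton hvw.ne ⟨p⟩ fun _ _ ↦
      Separates.unique h3 (fun _ _ ↦ adj_of_sup_fromEdgeSet) hm hv₁ hv₂ hw₁ hw₂ hbridge
  obtain ⟨C₁, hC₁, hvwC₁, hsupp₁⟩ := exists_isCycle_cons_of_isPath hvw hP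
  obtain ⟨C₂, hC₂, hvwC₂, hsupp₂⟩ := exists_isCycle_cons_of_isPath hvw hQ
  refine ⟨w, w, C₁, C₂, hC₁, hC₂, hvwC₁, hvwC₂,
    (Finset.card_le_card (t := {v, w, z}) ?_).trans Finset.card_le_three⟩
  intro y hy
  simp only [Finset.mem_inter, List.mem_toFinset, hsupp₁, hsupp₂, List.mem_cons] at hy
  simp only [Finset.mem_insert, Finset.mem_singleton]
  by_cases hyw : y = w
  · exact .inr (.inl hyw)
  · exact hPQ y (hy.1.resolve_left hyw) (hy.2.resolve_left hyw)

/-- If G + m1m2 is 3-vertex-connected and vw is an interior link with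
G − vw 2-edge-connected, then there exist two cycles both containing the edge vw and
sharing at most 3 vertices. -/
theorem two_cycles_through_interior_link {V : Type*} [Fintype V] [DecidableEq V]
    (G : SimpleGraph V) (hG : G.Connected)
    (m1 m2 : V) (hm : m1 ≠ m2) (hnadj : ¬ G.Adj m1 m2)
    (h3 : KVertexConnected (G ⊔ SimpleGraph.fromEdgeSet {s(m1, m2)}) 3)
    (v w : V) (hvw : G.Adj v w)
    (hint : v ≠ m1 ∧ v ≠ m2 ∧ w ≠ m1 ∧ w ≠ m2)
    (h2e : KEdgeConnected (G.deleteEdges {s(v, w)}) 2) :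
    ∃ (a b : V) (C1 : G.Walk a a) (C2 : G.Walk b b),
      C1.IsCycle ∧ C2.IsCycle ∧ s(v, w) ∈ C1.edges ∧ s(v, w) ∈ C2.edges ∧
      (C1.support.toFinset ∩ C2.support.toFinset).card ≤ 3 :=
  two_cycles_through_interior_link_general G m1 m2 hm h3 v w hvw hint h2e
end

section
/- Let G be a finite connected simple graph and M ⊆ V(G) a set of monitors with |M| ≥ 3, and let G_ex be the extended graph of G. Then G_ex − e is 2-edge-connected for every edge e ∈ E(G) if and only if G_ex is 3-edge-connected. -/
open SimpleGraph

/-!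
Deleting at most two edges of `G_ex` either removes an edge `e` of `G`, and then it is a deletion
of at most one edge from `G_ex − e`, or it removes no edge of `G`. In the latter case the copy of
the connected graph `G` survives, and each virtual monitor, having at least three edges into it,
keeps one of them. The converse is monotonicity of edge-connectivity.
-/

namespace KEdgeConnected

variable {W : Type*} [Fintype W] {H : SimpleGraph W} {k : ℕ}

theorem deleteEdges_singleton (h : KEdgeConnected H (k + 1)) (e : Sym2 W) :
    KEdgeConnected (H.deleteEdges {e}) k := by
  classical
  refine ⟨h.1, fun F hF => ?_⟩
  rw [deleteEdges_deleteEdges, Set.singleton_union, ← Finset.coe_insert]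
  exact h.2 _ ((Finset.card_insert_le e F).trans_lt (by omega))

theorem connected_deleteEdges_of_mem {e : Sym2 W} (h : KEdgeConnected (H.deleteEdges {e}) k)
    {F : Finset (Sym2 W)} (he : e ∈ F) (hF : F.card ≤ k) : (H.deleteEdges F).Connected := by
  classical
  have hsplit : (↑F : Set (Sym2 W)) = {e} ∪ ↑(F.erase e) := by
    rw [Finset.coe_erase, Set.singleton_union, Set.insert_sdiff_singleton,
      Set.insert_eq_of_mem (Finset.mem_coe.2 he)]
  rw [hsplit, ← deleteEdges_deleteEdges]
  exact h.2 _ (by rw [Finset.card_erase_of_mem he]; have := Finset.card_pos.2 ⟨e, he⟩; omega)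

end KEdgeConnected

theorem SimpleGraph.exists_adj_deleteEdges_of_card_lt {W : Type*} {H : SimpleGraph W} {v : W}
    {S : Finset W} (hS : ∀ w ∈ S, H.Adj v w) {F : Finset (Sym2 W)} (hF : F.card < S.card) :
    ∃ w ∈ S, (H.deleteEdges F).Adj v w := by
  classical
  by_contra! hall
  have hsub : S.image (fun w => s(v, w)) ⊆ F := by
    intro x hx
    obtain ⟨w, hw, rfl⟩ := Finset.mem_image.1 hx
    by_contra hnot
    exact hall w hw ((deleteEdges_adj ..).2 ⟨hS w hw, hnot⟩)
  have := Finset.card_le_card hsub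
  rw [Finset.card_image_of_injective _ fun _ _ => Sym2.congr_right.1] at this
  omega

section ExtendedGraph

variable {V : Type*} (G : SimpleGraph V) (M : Set V)

@[simp]
theorem extendedGraph_adj_inl_inl (u v : V) :
    (extendedGraph G M).Adj (Sum.inl u) (Sum.inl v) ↔ G.Adj u v := by
  simp only [extendedGraph, fromRel_adj, ne_eq, Sum.inl.injEq]
  exact ⟨fun ⟨_, h⟩ => h.elim id fun h => h.symm, fun h => ⟨h.ne, Or.inl h⟩⟩

@[simp]
theorem extendedGraph_adj_inr_inl (b : Bool) (m : V) :
    (extendedGraph G M).Adj (Sum.inr b) (Sum.inl m) ↔ m ∈ M := by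
  simp [extendedGraph]

end ExtendedGraph

theorem SimpleGraph.Connected.extendedGraph_deleteEdges {V : Type*} {G : SimpleGraph V}
    {M : Finset V} (hG : G.Connected)
    {F : Finset (Sym2 (V ⊕ Bool))} (hFG : ∀ e ∈ G.edgeSet, e.map Sum.inl ∉ F)
    (hFM : F.card < M.card) : ((extendedGraph G ↑M).deleteEdges ↑F).Connected := by
  set H := (extendedGraph G ↑M).deleteEdges ↑F
  let copy : G →g H := ⟨Sum.inl, fun {a b} hab => (deleteEdges_adj ..).2
    ⟨(extendedGraph_adj_inl_inl ..).2 hab, by simpa using hFG s(a, b) hab⟩⟩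
  have hcopy (u v : V) : H.Reachable (Sum.inl u) (Sum.inl v) := (hG.preconnected u v).map copy
  have hreach (z : V ⊕ Bool) : ∃ u, H.Reachable z (Sum.inl u) := by
    rcases z with u | b
    · exact ⟨u, .refl _⟩
    · obtain ⟨w, hw, hadj⟩ := exists_adj_deleteEdges_of_card_lt (H := extendedGraph G ↑M)
        (S := M.map .inl) (v := Sum.inr b) (F := F) (by simp) (by rwa [Finset.card_map])
      obtain ⟨m, -, rfl⟩ := Finset.mem_map.1 hw
      exact ⟨m, hadj.reachable⟩
  refine (connected_iff_exists_forall_reachable H).2 ⟨Sum.inr false, fun z => ?_⟩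
  obtain ⟨u, hu⟩ := hreach (Sum.inr false)
  obtain ⟨v, hv⟩ := hreach z
  exact hu.trans ((hcopy u v).trans hv.symm)

theorem extended_two_edge_connected_iff_three_edge_connected_general
    {V : Type*} [Fintype V]
    (G : SimpleGraph V) (hG : G.Connected) (M : Finset V) (hM : 3 ≤ M.card) :
    (∀ e ∈ G.edgeSet,
      KEdgeConnected ((extendedGraph G ↑M).deleteEdges {e.map Sum.inl}) 2) ↔
    KEdgeConnected (extendedGraph G ↑M) 3 := by
  refine ⟨fun h => ⟨by simp [Fintype.card_sum], fun F hF => ?_⟩,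
    fun h e _ => h.deleteEdges_singleton _⟩
  by_cases hFG : ∃ e ∈ G.edgeSet, e.map Sum.inl ∈ F
  · obtain ⟨e, he, heF⟩ := hFG
    exact (h e he).connected_deleteEdges_of_mem heF (by omega)
  · push Not at hFG
    exact hG.extendedGraph_deleteEdges hFG (by omega)

/-- With at least 3 monitors, G_ex − e is 2-edge-connected for every
edge e of G if and only if G_ex is 3-edge-connected. -/
theorem extended_two_edge_connected_iff_three_edge_connected
    {V : Type*} [Fintype V] [DecidableEq V]
    (G : SimpleGraph V) (hG : G.Connected) (M : Finset V) (hM : 3 ≤ M.card) :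
    (∀ e ∈ G.edgeSet,
      KEdgeConnected ((extendedGraph G ↑M).deleteEdges {e.map Sum.inl}) 2) ↔
    KEdgeConnected (extendedGraph G ↑M) 3 :=
  extended_two_edge_connected_iff_three_edge_connected_general G hG M hM
end

section
/- Let G be a finite simple graph with two distinguished vertices m1 ≠ m2 (the monitors). Then every edge e of G that is incident to m1 or to m2 and satisfies e ≠ {m1, m2} is unidentifiable. -/
open SimpleGraph

/- Every simple path from m1 to m2 has exactly one edge at m1 and exactly one edge at m2, so
the weights "1 on the edges at m1" and "1 on the edges at m2" give every such path weight 1.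
They differ on any edge meeting exactly one of the two monitors. -/

noncomputable def incidenceWeight {V : Type*} (x : V) : Sym2 V → ℝ :=
  Set.indicator {e | x ∈ e} 1

theorem incidenceWeight_of_mem {V : Type*} {x : V} {e : Sym2 V} (h : x ∈ e) :
    incidenceWeight x e = 1 :=
  Set.indicator_of_mem (s := {e | x ∈ e}) h 1

theorem incidenceWeight_of_notMem {V : Type*} {x : V} {e : Sym2 V} (h : x ∉ e) :
    incidenceWeight x e = 0 :=
  Set.indicator_of_notMem (s := {e | x ∈ e}) h 1

namespace SimpleGraph.Walk

variable {V : Type*} {G : SimpleGraph V}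

@[simp]
theorem walkWeight_cons (w : Sym2 V → ℝ) {a b c : V} (h : G.Adj a b) (p : G.Walk b c) :
    walkWeight G w (cons h p) = w s(a, b) + walkWeight G w p := by
  simp only [walkWeight, edges_cons, List.map_cons, List.sum_cons]

theorem walkWeight_reverse (w : Sym2 V → ℝ) {a b : V} (p : G.Walk a b) :
    walkWeight G w p.reverse = walkWeight G w p := by
  simp only [walkWeight, edges_reverse, List.map_reverse, List.sum_reverse]

theorem walkWeight_incidenceWeight_of_notMem_support {a b x : V} (p : G.Walk a b)
    (hx : x ∉ p.support) : walkWeight G (incidenceWeight x) p = 0 := by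
  induction p with
  | nil => rfl
  | @cons u v _ h q ih =>
    rw [support_cons, List.mem_cons, not_or] at hx
    obtain ⟨hxu, hxq⟩ := hx
    have hx_edge : x ∉ s(u, v) := by
      rw [Sym2.mem_iff, not_or]
      exact ⟨hxu, fun hxv => hxq (hxv ▸ q.start_mem_support)⟩
    rw [walkWeight_cons, ih hxq, incidenceWeight_of_notMem hx_edge, add_zero]

theorem walkWeight_incidenceWeight_start {a b : V} (p : G.Walk a b) (hp : p.IsPath)
    (hab : a ≠ b) : walkWeight G (incidenceWeight a) p = 1 := by
  cases p with
  | nil => exact absurd rfl hab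
  | cons h q =>
    rw [cons_isPath_iff] at hp
    rw [walkWeight_cons, incidenceWeight_of_mem (Sym2.mem_mk_left _ _),
      walkWeight_incidenceWeight_of_notMem_support q hp.2, add_zero]

theorem walkWeight_incidenceWeight_end {a b : V} (p : G.Walk a b) (hp : p.IsPath)
    (hab : a ≠ b) : walkWeight G (incidenceWeight b) p = 1 := by
  rw [← walkWeight_reverse, walkWeight_incidenceWeight_start p.reverse hp.reverse hab.symm]

end SimpleGraph.Walk

theorem exterior_links_unidentifiable_general {V : Type*}
    (G : SimpleGraph V) (m1 m2 : V) (hm : m1 ≠ m2) :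
    ∀ e ∈ G.edgeSet, (m1 ∈ e ∨ m2 ∈ e) → e ≠ s(m1, m2) →
      ¬ Identifiable G m1 m2 e := by
  intro e _ hmon hne hid
  have hpaths : ∀ p : G.Walk m1 m2, p.IsPath →
      walkWeight G (incidenceWeight m1) p = walkWeight G (incidenceWeight m2) p :=
    fun p hp => by
      rw [p.walkWeight_incidenceWeight_start hp hm, p.walkWeight_incidenceWeight_end hp hm]
  have hnotboth : ¬ (m1 ∈ e ∧ m2 ∈ e) := fun h => hne ((Sym2.mem_and_mem_iff hm).1 h)
  have hsame : incidenceWeight m1 e = incidenceWeight m2 e := hid _ _ hpaths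
  rcases hmon with h1 | h2
  · have h2 : m2 ∉ e := fun h2 => hnotboth ⟨h1, h2⟩
    rw [incidenceWeight_of_mem h1, incidenceWeight_of_notMem h2] at hsame
    exact one_ne_zero hsame
  · have h1 : m1 ∉ e := fun h1 => hnotboth ⟨h1, h2⟩
    rw [incidenceWeight_of_notMem h1, incidenceWeight_of_mem h2] at hsame
    exact zero_ne_one hsame

/-- Every exterior link (an edge incident to a monitor) other than the
direct edge m1m2 is unidentifiable. -/
theorem exterior_links_unidentifiable {V : Type*} [Fintype V] [DecidableEq V]
    (G : SimpleGraph V) (m1 m2 : V) (hm : m1 ≠ m2) :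
    ∀ e ∈ G.edgeSet, (m1 ∈ e ∨ m2 ∈ e) → e ≠ s(m1, m2) →
      ¬ Identifiable G m1 m2 e :=
  exterior_links_unidentifiable_general G m1 m2 hm
end

section
/- Let G be a finite connected simple graph and M ⊆ V(G) a set of monitors with |M| ≥ 3 such that for every pair of distinct vertices u1, u2 ∈ V(G), every connected component of G − u1 − u2 contains a vertex of M. Then the extended graph G_ex of G is 3-vertex-connected. -/
open SimpleGraph

/-! Let `S` be a set of at most two vertices of `G_ex`. Every vertex outside `S` reaches a monitor
outside `S`: a real vertex `x` does so already inside `G - u₁ - u₂` for a pair `{u₁, u₂}` that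
contains the real vertices of `S` but not `x`, and a virtual monitor is adjacent to every monitor.
Any two monitors outside `S` are joined through a virtual monitor outside `S`; if both virtual
monitors lie in `S`, then no real vertex does, and the connected graph `G` survives intact. -/

lemma Finset.exists_pair_superset_of_notMem {α : Type*} [Fintype α] [DecidableEq α]
    (hα : 3 ≤ Fintype.card α) {D : Finset α} (hD : D.card ≤ 2) {x : α} (hx : x ∉ D) :
    ∃ u₁ u₂, u₁ ≠ u₂ ∧ x ≠ u₁ ∧ x ≠ u₂ ∧ D ⊆ {u₁, u₂} := by
  obtain ⟨U, hDU, hUx, hU⟩ := Finset.exists_subsuperset_card_eq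
    (Finset.subset_erase.2 ⟨Finset.subset_univ D, hx⟩) hD
    (by rw [Finset.card_erase_of_mem (Finset.mem_univ x), Finset.card_univ]; omega)
  obtain ⟨u₁, u₂, hu, rfl⟩ := Finset.card_eq_two.1 hU
  exact ⟨u₁, u₂, hu, fun h => Finset.notMem_erase x _ (hUx (by simp [h])),
    fun h => Finset.notMem_erase x _ (hUx (by simp [h])), hDU⟩

lemma Finset.toLeft_eq_empty_of_inr_mem {α : Type*} {S : Finset (α ⊕ Bool)} (hS : S.card < 3)
    (hinr : ∀ b, .inr b ∈ S) : S.toLeft = ∅ := by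
  have hright : S.toRight = Finset.univ := Finset.eq_univ_of_forall (by simpa using hinr)
  have := S.card_toLeft_add_card_toRight
  rw [hright, Finset.card_univ, Fintype.card_bool] at this
  exact Finset.card_eq_zero.1 (by omega)

lemma Finset.exists_mem_inl_notMem {α β : Type*} {M : Finset α} {S : Finset (α ⊕ β)}
    (hS : S.card < M.card) : ∃ y ∈ M, .inl y ∉ S := by
  obtain ⟨y, hyM, hyS⟩ := Finset.exists_mem_notMem_of_card_lt_card (s := S.toLeft) (t := M)
    (S.card_toLeft_le.trans_lt hS)
  exact ⟨y, hyM, by simpa using hyS⟩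

namespace extendedGraph

variable {V : Type*} {G : SimpleGraph V}

@[simp]
lemma adj_inl_inl {M : Set V} {u v : V} :
    (extendedGraph G M).Adj (.inl u) (.inl v) ↔ G.Adj u v := by
  simp only [extendedGraph, fromRel_adj, ne_eq, Sum.inl.injEq]
  exact ⟨fun ⟨_, h⟩ => h.elim id .symm, fun h => ⟨h.ne, .inl h⟩⟩

@[simp]
lemma adj_inl_inr {M : Set V} {u : V} {b : Bool} :
    (extendedGraph G M).Adj (.inl u) (.inr b) ↔ u ∈ M := by
  simp [extendedGraph, fromRel_adj]

def inlHom (M : Set V) : G →g extendedGraph G M :=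
  ⟨Sum.inl, adj_inl_inl.2⟩

lemma reachable_induce_inl {M : Set V} {s : Set V} {t : Set (V ⊕ Bool)}
    (hst : Set.MapsTo Sum.inl s t) {x y : s} (hxy : (G.induce s).Reachable x y) :
    ((extendedGraph G M).induce t).Reachable ⟨.inl x, hst x.2⟩ ⟨.inl y, hst y.2⟩ :=
  hxy.map (induceHom (inlHom M) hst)

variable [Fintype V] [DecidableEq V] {M : Finset V} {S : Finset (V ⊕ Bool)}

lemma exists_reachable_monitor_of_inl (hV : 3 ≤ Fintype.card V)
    (h : ∀ u₁ u₂ : V, u₁ ≠ u₂ → ∀ x : {v // v ≠ u₁ ∧ v ≠ u₂}, ∃ y : {v // v ≠ u₁ ∧ v ≠ u₂},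
      (y : V) ∈ M ∧ (G.induce {v | v ≠ u₁ ∧ v ≠ u₂}).Reachable x y)
    (hS : S.card < 3) {x : V} (hx : .inl x ∉ S) :
    ∃ y ∈ M, ∃ hy : .inl y ∉ S, ((extendedGraph G ↑M).induce ↑Sᶜ).Reachable
      ⟨.inl x, Finset.mem_compl.2 hx⟩ ⟨.inl y, Finset.mem_compl.2 hy⟩ := by
  obtain ⟨u₁, u₂, hu, hx₁, hx₂, hSu⟩ := Finset.exists_pair_superset_of_notMem hV
    (S.card_toLeft_le.trans (by omega)) (x := x) (by simpa using hx)
  have hmaps : Set.MapsTo Sum.inl {v | v ≠ u₁ ∧ v ≠ u₂} (↑Sᶜ : Set (V ⊕ Bool)) :=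
    fun v ⟨hv₁, hv₂⟩ => Finset.mem_compl.2 fun hvS => by
      simpa [hv₁, hv₂] using hSu (Finset.mem_toLeft.2 hvS)
  obtain ⟨⟨y, hy⟩, hyM, hxy⟩ := h u₁ u₂ hu ⟨x, hx₁, hx₂⟩
  exact ⟨y, hyM, Finset.mem_compl.1 (hmaps hy), reachable_induce_inl hmaps hxy⟩

lemma exists_reachable_monitor (hM : 3 ≤ M.card)
    (h : ∀ u₁ u₂ : V, u₁ ≠ u₂ → ∀ x : {v // v ≠ u₁ ∧ v ≠ u₂}, ∃ y : {v // v ≠ u₁ ∧ v ≠ u₂},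
      (y : V) ∈ M ∧ (G.induce {v | v ≠ u₁ ∧ v ≠ u₂}).Reachable x y)
    (hS : S.card < 3) (a : ↥(↑Sᶜ : Set (V ⊕ Bool))) :
    ∃ y ∈ M, ∃ hy : .inl y ∉ S,
      ((extendedGraph G ↑M).induce ↑Sᶜ).Reachable a ⟨.inl y, Finset.mem_compl.2 hy⟩ := by
  rcases a with ⟨x | b, ha⟩
  · exact exists_reachable_monitor_of_inl (hM.trans M.card_le_univ) h hS (Finset.mem_compl.1 ha)
  · obtain ⟨y, hyM, hyS⟩ := Finset.exists_mem_inl_notMem (hS.trans_le hM)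
    refine ⟨y, hyM, hyS, Adj.reachable ?_⟩
    simpa [adj_comm] using hyM

lemma reachable_monitors (hG : G.Connected) (hS : S.card < 3) {y y' : V} (hy : y ∈ M)
    (hy' : y' ∈ M) (hyS : .inl y ∉ S) (hy'S : .inl y' ∉ S) :
    ((extendedGraph G ↑M).induce ↑Sᶜ).Reachable
      ⟨.inl y, Finset.mem_compl.2 hyS⟩ ⟨.inl y', Finset.mem_compl.2 hy'S⟩ := by
  by_cases hinr : ∀ b, .inr b ∈ S
  · have hmaps : Set.MapsTo Sum.inl Set.univ (↑Sᶜ : Set (V ⊕ Bool)) := fun v _ =>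
      Finset.mem_compl.2 fun hvS => by
        simpa [Finset.toLeft_eq_empty_of_inr_mem hS hinr] using Finset.mem_toLeft.2 hvS
    exact reachable_induce_inl hmaps ((hG.preconnected y y').map (induceUnivIso G).symm.toHom)
  · obtain ⟨b, hb⟩ := not_forall.1 hinr
    have hadj {z : V} (hz : z ∈ M) (hzS : .inl z ∉ S) :
        ((extendedGraph G ↑M).induce ↑Sᶜ).Adj
          ⟨.inl z, Finset.mem_compl.2 hzS⟩ ⟨.inr b, Finset.mem_compl.2 hb⟩ := by
      simpa using hz
    exact (hadj hy hyS).reachable.trans (hadj hy' hy'S).reachable.symm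

end extendedGraph

/-- If G is connected, there are at least 3 monitors, and for every pair
of distinct vertices u1, u2 every connected component of G − u1 − u2 contains a
monitor, then the extended graph G_ex is 3-vertex-connected. -/
theorem extended_graph_three_connected_of_components_have_monitor
    {V : Type*} [Fintype V] [DecidableEq V]
    (G : SimpleGraph V) (hG : G.Connected) (M : Finset V) (hM : 3 ≤ M.card)
    (h : ∀ u1 u2 : V, u1 ≠ u2 →
      ∀ x : {v // v ≠ u1 ∧ v ≠ u2}, ∃ y : {v // v ≠ u1 ∧ v ≠ u2},
        (y : V) ∈ M ∧ (G.induce {v | v ≠ u1 ∧ v ≠ u2}).Reachable x y) :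
    KVertexConnected (extendedGraph G ↑M) 3 := by
  have hV : 3 ≤ Fintype.card V := hM.trans M.card_le_univ
  refine ⟨by simp only [Fintype.card_sum, Fintype.card_bool]; omega, fun S hS => ?_⟩
  obtain ⟨y₀, -, hy₀S⟩ := Finset.exists_mem_inl_notMem (hS.trans_le hM)
  have : Nonempty ↥(↑Sᶜ : Set (V ⊕ Bool)) := ⟨⟨.inl y₀, Finset.mem_compl.2 hy₀S⟩⟩
  refine .mk fun a a' => ?_
  obtain ⟨y, hyM, hyS, hay⟩ := extendedGraph.exists_reachable_monitor hM h hS a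
  obtain ⟨y', hy'M, hy'S, ha'y'⟩ := extendedGraph.exists_reachable_monitor hM h hS a'
  exact hay.trans ((extendedGraph.reachable_monitors hG hS hyM hy'M hyS hy'S).trans ha'y'.symm)
end
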